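/- Let C ⊆ 𝒴 be a nonempty code with |C| = M, let Q^C be the uniform probability mass function on C (Q^C(y) = 1/M for y ∈ C, and 0 otherwise), and let p_c be the pairwise correct probability defined with Q^C in place of Q_Y. Then for every x ∈ 𝒳 and every y ∈ 𝒴: M · Q^C(y) · Leb{u ∈ [0,1] : p_c(x,y,u) ≤ 1/M} = (1/k(x)) · 1{ y ∈ C and d(x,y) = min_{c∈C} d(x,c) }, where k(x) := |{ c ∈ C : d(x,c) = min_{c'∈C} d(x,c') }| and Leb is Lebesgue measure on [0,1]. That is, the channel W^{1/M} coincides with the optimal encoder of 𝒳 into C that maps x uniformly at random to a codeword of minimal distortion. -/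

import Mathlib

/-!
For the uniform pmf on `C`, `p_c(x,y,u) = (L + u E) / M`, where `L` and `E` count the codewords
whose distortion from `x` is below, resp. equal to, `d(x,y)`. Hence the `u ∈ [0,1]` with
`p_c ≤ 1/M` form the interval `[0, min 1 ((1 - L) / E)]`. If `y` has minimal distortion then
`L = 0` and `E = k(x)`, so the interval has length `1/k(x)`; otherwise `L ≥ 1` and it has length `0`.
-/

open MeasureTheory

/-- The pairwise correct probability `p_c(x,y,u)` with respect to the pmf `Q` on `Y`:
`p_c(x,y,u) = Q{y' : d(x,y') < d(x,y)} + u * Q{y' : d(x,y') = d(x,y)}`. -/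
noncomputable def pc {X Y : Type*} [Fintype Y] (Q : Y → ℝ) (d : X → Y → ℝ)
    (x : X) (y : Y) (u : ℝ) : ℝ :=
  (∑ y' : Y, if d x y' < d x y then Q y' else 0)
    + u * (∑ y' : Y, if d x y' = d x y then Q y' else 0)

open Finset

theorem sum_ite_ite_mem {Y R : Type*} [Fintype Y] [DecidableEq Y] [NonAssocSemiring R]
    (C : Finset Y) (p : Y → Prop) [DecidablePred p] (c : R) :
    (∑ y : Y, if p y then (if y ∈ C then c else 0) else 0) = #(C.filter p) * c := by
  rw [← sum_filter, ← sum_filter, sum_const, nsmul_eq_mul]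
  congr 3
  ext y
  simp [and_comm]

theorem pc_ite_mem {X Y : Type*} [Fintype Y] [DecidableEq Y] (C : Finset Y) (q : ℝ)
    (d : X → Y → ℝ) (x : X) (y : Y) (u : ℝ) :
    pc (fun y' => if y' ∈ C then q else 0) d x y u =
      #{c ∈ C | d x c < d x y} * q + u * (#{c ∈ C | d x c = d x y} * q) := by
  simp only [pc, sum_ite_ite_mem]

theorem toReal_volume_Icc_add_mul_le {a b t : ℝ} (hb : 0 < b) :
    (volume {u : ℝ | u ∈ Set.Icc 0 1 ∧ a + u * b ≤ t}).toReal =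
      max (min 1 ((t - a) / b)) 0 := by
  have hset : {u : ℝ | u ∈ Set.Icc 0 1 ∧ a + u * b ≤ t} = Set.Icc 0 (min 1 ((t - a) / b)) := by
    ext u
    simp only [Set.mem_ofPred_eq, Set.mem_Icc, le_min_iff, le_div_iff₀ hb]
    constructor
    · rintro ⟨⟨h0, h1⟩, h2⟩; exact ⟨h0, h1, by linarith⟩
    · rintro ⟨h0, h1, h2⟩; exact ⟨⟨h0, h1⟩, by linarith⟩
  rw [hset, Real.volume_Icc, sub_zero, ENNReal.toReal_ofReal']

theorem optimal_encoder {X Y : Type*} [Fintype Y]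
    [DecidableEq Y]
    (d : X → Y → ℝ)
    (C : Finset Y) (hC : C.Nonempty) (M : ℕ) (hM : M = C.card)
    (x : X) (y : Y) :
    (M : ℝ) * (if y ∈ C then 1 / (M : ℝ) else 0) *
        (volume {u : ℝ | u ∈ Set.Icc (0:ℝ) 1 ∧
          pc (fun y' => if y' ∈ C then 1 / (M : ℝ) else 0) d x y u ≤ 1 / (M : ℝ)}).toReal
      = (1 / ((C.filter fun c => d x c = C.inf' hC fun c => d x c).card : ℝ)) *
        (if y ∈ C ∧ d x y = C.inf' hC (fun c => d x c) then 1 else 0) := by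
  by_cases hy : y ∈ C
  swap
  · simp [hy]
  have hM0 : (M : ℝ) ≠ 0 := by simpa [hM] using hC.card_pos.ne'
  have hE : 0 < #{c ∈ C | d x c = d x y} := card_pos.2 ⟨y, mem_filter.2 ⟨hy, rfl⟩⟩
  simp only [pc_ite_mem, if_pos hy]
  rw [toReal_volume_Icc_add_mul_le (by positivity)]
  set L := #{c ∈ C | d x c < d x y}
  set E := #{c ∈ C | d x c = d x y}
  have hratio : (1 / M - L * (1 / M)) / (E * (1 / M)) = (1 - L) / (E : ℝ) := by
    field_simp
  rw [hratio, mul_one_div_cancel hM0, one_mul]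
  by_cases hmin : d x y = C.inf' hC fun c => d x c
  · have hL : L = 0 := by
      rw [card_eq_zero, filter_eq_empty_iff, hmin]
      exact fun c hc => not_lt.2 (C.inf'_le _ hc)
    rw [hL, if_pos ⟨hy, hmin⟩, ← hmin, Nat.cast_zero, sub_zero, mul_one,
      min_eq_right (div_le_one_of_le₀ (Nat.one_le_cast.2 hE) (by positivity)),
      max_eq_left (by positivity)]
  · obtain ⟨c₀, hc₀, hc₀m⟩ := C.exists_mem_eq_inf' hC fun c => d x c
    have hL : 1 ≤ L :=
      card_pos.2 ⟨c₀, mem_filter.2 ⟨hc₀, hc₀m ▸ (C.inf'_le _ hy).lt_of_ne' hmin⟩⟩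
    rw [if_neg (fun h => hmin h.2), mul_zero, max_eq_right]
    exact (min_le_right _ _).trans
      (div_nonpos_of_nonpos_of_nonneg (sub_nonpos.2 (Nat.one_le_cast.2 hL)) (Nat.cast_nonneg _))
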